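/- arXiv:1105.4054 — 6 statements merged into one kernel-verified Lean document; each statement's English description precedes it below -/
import Mathlib

section
/- Let f : ℝⁿ → ℝⁿ be a C¹ vector field with global flow Φ, and let F : ℝⁿ → ℝᵏ (k ≤ n) be a C¹ conserved quantity for ẋ = f(x). For s ∈ {0,...,k} define M⁽ˢ⁾ = { x ∈ ℝⁿ : rank ∇F(x) = s }. Then each set M⁽ˢ⁾ is invariant under the flow: for every x ∈ M⁽ˢ⁾ and every t ∈ ℝ, Φ_t(x) ∈ M⁽ˢ⁾. Equivalently, the rank of the Jacobian matrix ∇F is constant along every trajectory of the flow. -/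
/-! Conservation gives `F ∘ Φₜ = F`, so by the chain rule `∇F(x) = ∇F(Φₜ x) ∘ ∇Φₜ(x)`.
Since `Φ₋ₜ` inverts `Φₜ`, the derivative `∇Φₜ(x)` is onto, and composing with an onto map
does not change the range: `∇F(x)` and `∇F(Φₜ x)` have the same image, hence the same rank. -/

open Function

section

variable {𝕜 E E' G : Type*} [NontriviallyNormedField 𝕜]
  [NormedAddCommGroup E] [NormedSpace 𝕜 E] [NormedAddCommGroup E'] [NormedSpace 𝕜 E']
  [NormedAddCommGroup G] [NormedSpace 𝕜 G]

theorem fderiv_surjective_of_rightInverse {g : E → E'} {h : E' → E} {y : E'}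
    (hgh : RightInverse h g) (hg : DifferentiableAt 𝕜 g (h y)) (hh : DifferentiableAt 𝕜 h y) :
    Surjective (fderiv 𝕜 g (h y)) := by
  have hid : (fderiv 𝕜 g (h y)).comp (fderiv 𝕜 h y) = ContinuousLinearMap.id 𝕜 E' := by
    rw [← fderiv_comp y hg hh, hgh.comp_eq_id, fderiv_id]
  exact fun v => ⟨fderiv 𝕜 h y v, by simpa using congr($hid v)⟩

theorem range_fderiv_comp_of_surjective {F : E' → G} {g : E → E'} {x : E}
    (hF : DifferentiableAt 𝕜 F (g x)) (hg : DifferentiableAt 𝕜 g x)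
    (hsurj : Surjective (fderiv 𝕜 g x)) :
    LinearMap.range (fderiv 𝕜 (F ∘ g) x : E →ₗ[𝕜] G) =
      LinearMap.range (fderiv 𝕜 F (g x) : E' →ₗ[𝕜] G) := by
  rw [fderiv_comp x hF hg, ContinuousLinearMap.toLinearMap_comp,
    LinearMap.range_comp_of_range_eq_top _ (LinearMap.range_eq_top.mpr hsurj)]

end

theorem flow_rightInverse_neg {X : Type*} {Φ : ℝ → X → X} (hΦ0 : Φ 0 = id)
    (hΦadd : ∀ t s : ℝ, Φ (t + s) = Φ t ∘ Φ s) (t : ℝ) :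
    RightInverse (Φ (-t)) (Φ t) := by
  intro x
  rw [← comp_apply (f := Φ t), ← hΦadd, add_neg_cancel, hΦ0, id]

theorem rank_level_sets_invariant_general
    (n k : ℕ)
    (Φ : ℝ → (Fin n → ℝ) → (Fin n → ℝ))
    (hΦ0 : Φ 0 = id)
    (hΦadd : ∀ t s : ℝ, Φ (t + s) = Φ t ∘ Φ s)
    (hΦC1 : ∀ t : ℝ, ContDiff ℝ 1 (Φ t))
    (F : (Fin n → ℝ) → (Fin k → ℝ)) (hF : ContDiff ℝ 1 F)
    (hFcons : ∀ (t : ℝ) (x : Fin n → ℝ), F (Φ t x) = F x) :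
    ∀ s : ℕ, s ≤ k → ∀ x : Fin n → ℝ,
      Module.finrank ℝ (LinearMap.range (fderiv ℝ F x : (Fin n → ℝ) →ₗ[ℝ] (Fin k → ℝ))) = s →
      ∀ t : ℝ,
        Module.finrank ℝ (LinearMap.range (fderiv ℝ F (Φ t x) : (Fin n → ℝ) →ₗ[ℝ] (Fin k → ℝ))) = s := by
  intro s _ x hx t
  have hΦd (τ : ℝ) : Differentiable ℝ (Φ τ) := (hΦC1 τ).differentiable one_ne_zero
  have hback : Φ (-t) (Φ t x) = x := by simpa using flow_rightInverse_neg hΦ0 hΦadd (-t) x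
  have hsurj : Surjective (fderiv ℝ (Φ t) x) := hback ▸
    fderiv_surjective_of_rightInverse (flow_rightInverse_neg hΦ0 hΦadd t) (hΦd t _) (hΦd (-t) _)
  have hinv : F ∘ Φ t = F := funext (hFcons t)
  rw [← range_fderiv_comp_of_surjective (hF.differentiable one_ne_zero _) (hΦd t x) hsurj,
    hinv, hx]

/-- For a `C¹` conserved quantity `F : ℝⁿ → ℝᵏ` of the flow `Φ` of a `C¹` vector
field `f`, each level set of the rank of the Jacobian of `F`,
`M⁽ˢ⁾ = {x | rank ∇F(x) = s}`, is invariant under the flow. -/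
theorem rank_level_sets_invariant
    (n k : ℕ) (hkn : k ≤ n)
    (f : (Fin n → ℝ) → (Fin n → ℝ)) (hf : ContDiff ℝ 1 f)
    (Φ : ℝ → (Fin n → ℝ) → (Fin n → ℝ))
    (hΦ0 : Φ 0 = id)
    (hΦadd : ∀ t s : ℝ, Φ (t + s) = Φ t ∘ Φ s)
    (hΦC1 : ∀ t : ℝ, ContDiff ℝ 1 (Φ t))
    (hΦode : ∀ (t : ℝ) (x : Fin n → ℝ),
      HasDerivAt (fun τ : ℝ => Φ τ x) (f (Φ t x)) t)
    (F : (Fin n → ℝ) → (Fin k → ℝ)) (hF : ContDiff ℝ 1 F)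
    (hFcons : ∀ (t : ℝ) (x : Fin n → ℝ), F (Φ t x) = F x) :
    ∀ s : ℕ, s ≤ k → ∀ x : Fin n → ℝ,
      Module.finrank ℝ (LinearMap.range (fderiv ℝ F x : (Fin n → ℝ) →ₗ[ℝ] (Fin k → ℝ))) = s →
      ∀ t : ℝ,
        Module.finrank ℝ (LinearMap.range (fderiv ℝ F (Φ t x) : (Fin n → ℝ) →ₗ[ℝ] (Fin k → ℝ))) = s :=
  rank_level_sets_invariant_general n k Φ hΦ0 hΦadd hΦC1 F hF hFcons
end

section
/- Let f : ℝⁿ → ℝⁿ be a C¹ vector field with global flow Φ, and let F : ℝⁿ → ℝᵏ (k ≤ n) be a C¹ conserved quantity for ẋ = f(x). Then the set of critical points of F, namely M_c = { x ∈ ℝⁿ : rank ∇F(x) < k }, is invariant under the flow: for every x ∈ M_c and every t ∈ ℝ, Φ_t(x) ∈ M_c. -/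
/-!
Since `F = F ∘ Φ₋ₜ`, the chain rule at `Φₜ x` gives `DF(Φₜ x) = DF(x) ∘ DΦ₋ₜ(Φₜ x)`, so the
range of `DF(Φₜ x)` lies inside that of `DF(x)` and the rank cannot increase along the flow.
-/

open Module

section ConservedQuantity

variable {𝕜 : Type*} [NontriviallyNormedField 𝕜]
  {E : Type*} [NormedAddCommGroup E] [NormedSpace 𝕜 E]
  {G : Type*} [NormedAddCommGroup G] [NormedSpace 𝕜 G]

theorem range_fderiv_le_of_comp_eq {F : E → G} {g : E → E} {y : E}
    (hF : DifferentiableAt 𝕜 F (g y)) (hg : DifferentiableAt 𝕜 g y) (hFg : F ∘ g = F) :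
    LinearMap.range (fderiv 𝕜 F y : E →ₗ[𝕜] G) ≤
      LinearMap.range (fderiv 𝕜 F (g y) : E →ₗ[𝕜] G) := by
  have hchain : fderiv 𝕜 F y = (fderiv 𝕜 F (g y)).comp (fderiv 𝕜 g y) := by
    rw [← fderiv_comp y hF hg, hFg]
  rw [hchain]
  exact LinearMap.range_comp_le_range (fderiv 𝕜 g y : E →ₗ[𝕜] E) (fderiv 𝕜 F (g y) : E →ₗ[𝕜] G)

theorem finrank_range_fderiv_le_of_comp_eq [FiniteDimensional 𝕜 G] {F : E → G} {g : E → E}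
    {y : E} (hF : DifferentiableAt 𝕜 F (g y)) (hg : DifferentiableAt 𝕜 g y)
    (hFg : F ∘ g = F) :
    finrank 𝕜 (LinearMap.range (fderiv 𝕜 F y : E →ₗ[𝕜] G)) ≤
      finrank 𝕜 (LinearMap.range (fderiv 𝕜 F (g y) : E →ₗ[𝕜] G)) :=
  Submodule.finrank_mono (range_fderiv_le_of_comp_eq hF hg hFg)

end ConservedQuantity

theorem flow_neg_apply_flow {X : Type*} {Φ : ℝ → X → X} (hΦ0 : Φ 0 = id)
    (hΦadd : ∀ t s : ℝ, Φ (t + s) = Φ t ∘ Φ s) (t : ℝ) (x : X) : Φ (-t) (Φ t x) = x := by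
  simpa [hΦ0] using (congrFun (hΦadd (-t) t) x).symm

theorem critical_set_invariant_general
    (n k : ℕ)
    (Φ : ℝ → (Fin n → ℝ) → (Fin n → ℝ))
    (hΦ0 : Φ 0 = id)
    (hΦadd : ∀ t s : ℝ, Φ (t + s) = Φ t ∘ Φ s)
    (hΦC1 : ∀ t : ℝ, ContDiff ℝ 1 (Φ t))
    (F : (Fin n → ℝ) → (Fin k → ℝ)) (hF : ContDiff ℝ 1 F)
    (hFcons : ∀ (t : ℝ) (x : Fin n → ℝ), F (Φ t x) = F x) :
    ∀ x : Fin n → ℝ,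
      Module.finrank ℝ (LinearMap.range ((fderiv ℝ F x : (Fin n → ℝ) →ₗ[ℝ] (Fin k → ℝ)))) < k →
      ∀ t : ℝ,
        Module.finrank ℝ (LinearMap.range ((fderiv ℝ F (Φ t x) : (Fin n → ℝ) →ₗ[ℝ] (Fin k → ℝ)))) < k := by
  intro x hx t
  have hrank := finrank_range_fderiv_le_of_comp_eq (y := Φ t x)
    (hF.differentiable one_ne_zero _) ((hΦC1 (-t)).differentiable one_ne_zero _)
    (funext (hFcons (-t)))
  rw [flow_neg_apply_flow hΦ0 hΦadd] at hrank
  exact hrank.trans_lt hx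

/-- For a `C¹` conserved quantity `F : ℝⁿ → ℝᵏ` of the flow `Φ` of a `C¹` vector
field `f`, the set of critical points of `F`, `M_c = {x | rank ∇F(x) < k}`,
is invariant under the flow. -/
theorem critical_set_invariant
    (n k : ℕ) (hkn : k ≤ n)
    (f : (Fin n → ℝ) → (Fin n → ℝ)) (hf : ContDiff ℝ 1 f)
    (Φ : ℝ → (Fin n → ℝ) → (Fin n → ℝ))
    (hΦ0 : Φ 0 = id)
    (hΦadd : ∀ t s : ℝ, Φ (t + s) = Φ t ∘ Φ s)
    (hΦC1 : ∀ t : ℝ, ContDiff ℝ 1 (Φ t))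
    (hΦode : ∀ (t : ℝ) (x : Fin n → ℝ),
      HasDerivAt (fun τ : ℝ => Φ τ x) (f (Φ t x)) t)
    (F : (Fin n → ℝ) → (Fin k → ℝ)) (hF : ContDiff ℝ 1 F)
    (hFcons : ∀ (t : ℝ) (x : Fin n → ℝ), F (Φ t x) = F x) :
    ∀ x : Fin n → ℝ,
      Module.finrank ℝ (LinearMap.range ((fderiv ℝ F x : (Fin n → ℝ) →ₗ[ℝ] (Fin k → ℝ)))) < k →
      ∀ t : ℝ,
        Module.finrank ℝ (LinearMap.range ((fderiv ℝ F (Φ t x) : (Fin n → ℝ) →ₗ[ℝ] (Fin k → ℝ)))) < k :=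
  critical_set_invariant_general n k Φ hΦ0 hΦadd hΦC1 F hF hFcons
end

section
/- Let f : ℝⁿ → ℝⁿ be a vector field with global flow Φ such that each Φ_t is a C^q map (q ≥ 1), and let F = (F₁,...,F_k) : ℝⁿ → ℝᵏ be a C^q conserved quantity for ẋ = f(x). For r ∈ {1,...,q} define N⁽ʳ⁾ = { x ∈ ℝⁿ : ∂^α F_i(x) = 0 for all i ∈ {1,...,k}, all multi-indices α = (α₁,...,α_l) ∈ {1,...,n}^l, and all orders 1 ≤ l ≤ r }, i.e. the set of points where all partial derivatives of all components of F of order between 1 and r vanish. Then each N⁽ʳ⁾ is invariant under the flow: for every x ∈ N⁽ʳ⁾ and every t ∈ ℝ, Φ_t(x) ∈ N⁽ʳ⁾. -/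
/-! Since `F ∘ Φ₋ₜ = F` and `Φ₋ₜ (Φₜ x) = x`, the chain rule (in the form of the Faà di Bruno
bound) controls the derivatives of `F` of order `l` at `Φₜ x` by those of orders `0, …, l` at
`x`. Subtracting the constant `F x` from `F` kills the order-zero term without changing the
derivatives of positive order, so all the controlling terms vanish. -/

section

variable {𝕜 : Type*} [NontriviallyNormedField 𝕜]
  {E F G : Type*} [NormedAddCommGroup E] [NormedSpace 𝕜 E] [NormedAddCommGroup F]
  [NormedSpace 𝕜 F] [NormedAddCommGroup G] [NormedSpace 𝕜 G]

theorem iteratedFDeriv_sub_const {i : ℕ} (hi : i ≠ 0) (g : E → F) (c : F) :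
    iteratedFDeriv 𝕜 i (fun y => g y - c) = iteratedFDeriv 𝕜 i g := by
  obtain ⟨m, rfl⟩ := Nat.exists_eq_succ_of_ne_zero hi
  ext1 x
  simp only [iteratedFDeriv_succ_eq_comp_right, fderiv_sub_const]

theorem exists_norm_iteratedFDeriv_le_pow (f : E → F) (x : E) (n : ℕ) :
    ∃ D : ℝ, ∀ i, 1 ≤ i → i ≤ n → ‖iteratedFDeriv 𝕜 i f x‖ ≤ D ^ i := by
  refine ⟨1 + ∑ j ∈ Finset.range (n + 1), ‖iteratedFDeriv 𝕜 j f x‖, fun i hi hin => ?_⟩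
  have hsum_nonneg : 0 ≤ ∑ j ∈ Finset.range (n + 1), ‖iteratedFDeriv 𝕜 j f x‖ :=
    Finset.sum_nonneg fun j _ => norm_nonneg _
  have hterm : ‖iteratedFDeriv 𝕜 i f x‖ ≤ ∑ j ∈ Finset.range (n + 1), ‖iteratedFDeriv 𝕜 j f x‖ :=
    Finset.single_le_sum (f := fun j => ‖iteratedFDeriv 𝕜 j f x‖)
      (fun j _ => norm_nonneg _) (Finset.mem_range.2 (Nat.lt_succ_of_le hin))
  calc ‖iteratedFDeriv 𝕜 i f x‖ ≤ 1 + ∑ j ∈ Finset.range (n + 1), ‖iteratedFDeriv 𝕜 j f x‖ := by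
        linarith
    _ ≤ _ := le_self_pow₀ (by linarith) (by omega)

theorem iteratedFDeriv_comp_eq_zero {g : F → G} {h : E → F} {N : WithTop ℕ∞} {l : ℕ}
    (hg : ContDiff 𝕜 N g) (hh : ContDiff 𝕜 N h) (hlN : l ≤ N) (hl : l ≠ 0) (x : E)
    (hvanish : ∀ i, 1 ≤ i → i ≤ l → iteratedFDeriv 𝕜 i g (h x) = 0) :
    iteratedFDeriv 𝕜 l (g ∘ h) x = 0 := by
  set g₀ : F → G := fun y => g y - g (h x)
  have hg₀_vanish : ∀ i, i ≤ l → ‖iteratedFDeriv 𝕜 i g₀ (h x)‖ ≤ 0 := by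
    intro i hil
    rcases Nat.eq_zero_or_pos i with rfl | hi
    · simp [g₀, norm_iteratedFDeriv_zero]
    · simp [g₀, iteratedFDeriv_sub_const hi.ne', hvanish i hi hil]
  obtain ⟨D, hD⟩ := exists_norm_iteratedFDeriv_le_pow (𝕜 := 𝕜) h x l
  have hbound := norm_iteratedFDeriv_comp_le (hg.sub contDiff_const) hh hlN x hg₀_vanish hD
  rw [show g₀ ∘ h = fun y => (g ∘ h) y - g (h x) from rfl, iteratedFDeriv_sub_const hl] at hbound
  simpa using hbound

end

theorem vanishing_derivative_sets_invariant_general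
    (n k q : ℕ)
    (Φ : ℝ → (Fin n → ℝ) → (Fin n → ℝ))
    (hΦ0 : Φ 0 = id)
    (hΦadd : ∀ t s : ℝ, Φ (t + s) = Φ t ∘ Φ s)
    (hΦCq : ∀ t : ℝ, ContDiff ℝ q (Φ t))
    (F : (Fin n → ℝ) → (Fin k → ℝ)) (hF : ContDiff ℝ q F)
    (hFcons : ∀ (t : ℝ) (x : Fin n → ℝ), F (Φ t x) = F x) :
    ∀ r : ℕ, 1 ≤ r → r ≤ q →
      ∀ x : Fin n → ℝ,
        (∀ l : ℕ, 1 ≤ l → l ≤ r → iteratedFDeriv ℝ l F x = 0) →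
        ∀ t : ℝ, ∀ l : ℕ, 1 ≤ l → l ≤ r → iteratedFDeriv ℝ l F (Φ t x) = 0 := by
  intro r _ hrq x hx t l hl hlr
  have hback : Φ (-t) (Φ t x) = x := by
    simpa [hΦ0] using (congrFun (hΦadd (-t) t) x).symm
  have hF_back : F ∘ Φ (-t) = F := funext (hFcons (-t))
  rw [← hF_back]
  exact iteratedFDeriv_comp_eq_zero hF (hΦCq (-t)) (by exact_mod_cast hlr.trans hrq) (by omega)
    _ fun i hi hil => by rw [hback]; exact hx i hi (hil.trans hlr)

/-- For a `C^q` conserved quantity `F : ℝⁿ → ℝᵏ` of a flow `Φ` whose time-`t` maps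
are `C^q`, each set `N⁽ʳ⁾` (where all derivatives of `F` of orders `1,…,r` vanish,
`1 ≤ r ≤ q`) is invariant under the flow. -/
theorem vanishing_derivative_sets_invariant
    (n k q : ℕ) (hq : 1 ≤ q)
    (f : (Fin n → ℝ) → (Fin n → ℝ))
    (Φ : ℝ → (Fin n → ℝ) → (Fin n → ℝ))
    (hΦ0 : Φ 0 = id)
    (hΦadd : ∀ t s : ℝ, Φ (t + s) = Φ t ∘ Φ s)
    (hΦCq : ∀ t : ℝ, ContDiff ℝ q (Φ t))
    (hΦode : ∀ (t : ℝ) (x : Fin n → ℝ),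
      HasDerivAt (fun τ : ℝ => Φ τ x) (f (Φ t x)) t)
    (F : (Fin n → ℝ) → (Fin k → ℝ)) (hF : ContDiff ℝ q F)
    (hFcons : ∀ (t : ℝ) (x : Fin n → ℝ), F (Φ t x) = F x) :
    ∀ r : ℕ, 1 ≤ r → r ≤ q →
      ∀ x : Fin n → ℝ,
        (∀ l : ℕ, 1 ≤ l → l ≤ r → iteratedFDeriv ℝ l F x = 0) →
        ∀ t : ℝ, ∀ l : ℕ, 1 ≤ l → l ≤ r → iteratedFDeriv ℝ l F (Φ t x) = 0 :=
  vanishing_derivative_sets_invariant_general n k q Φ hΦ0 hΦadd hΦCq F hF hFcons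
end

section
/- Let n ≥ 3 be odd. On ℝ²ⁿ with coordinates (X₁,...,Xₙ,u₁,...,uₙ) define the periodic Toda conserved quantity I₃ = Σ_{1 ≤ i₁ < i₂ < i₃ ≤ n} u_{i₁} u_{i₂} u_{i₃} − Σ_{1 ≤ i,j ≤ n, j ≢ i (mod n), j ≢ i−1 (mod n)} u_i X_j, where X₀ := Xₙ. Then ∇I₃(X,u) = 0 if and only if X₁ = ⋯ = Xₙ = 0 and u₁ = ⋯ = uₙ = 0; i.e. the zero-gradient set M₍₀₎^{I₃} consists only of the origin. -/
/-- The conserved quantity `I₃` of the periodic Toda lattice, in the variables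
`(X₁,…,Xₙ,u₁,…,uₙ)` (indices of `X` and `u` taken modulo `n`). -/
noncomputable def todaPeriodicI3 (n : ℕ) [NeZero n]
    (p : (Fin n → ℝ) × (Fin n → ℝ)) : ℝ :=
  (∑ s ∈ Finset.powersetCard 3 (Finset.univ : Finset (Fin n)), ∏ i ∈ s, p.2 i)
    - ∑ i : Fin n, ∑ j : Fin n,
        if j ≠ i ∧ j ≠ i - 1 then p.2 i * p.1 j else 0

/-! Differentiating `I₃` in the direction of `X_k` gives `u_k + u_{k+1} = ∑ u`, and (once `u = 0`)
differentiating in the direction of `u_k` gives `X_{k-1} + X_k = ∑ X`. Subtracting two consecutive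
such equations makes the sequence `2`-periodic on `ℤ/n`; since `2` is invertible in `ℤ/n` for odd `n`,
it is constant, equal to some `c` with `2c = nc`, so `c = 0`. Conversely, the lowest-order terms of
`I₃` are quadratic, so its derivative at the origin vanishes. -/

open Fin.CommRing

theorem Fin.eq_zero_of_forall_add_add_one_eq_sum {M : Type*} [AddCommGroup M] [IsAddTorsionFree M]
    {n : ℕ} [NeZero n] (hodd : Odd n) {a : Fin n → M}
    (h : ∀ k, a k + a (k + 1) = ∑ i, a i) : a = 0 := by
  have periodic_two : Function.Periodic a 2 := fun k => by
    have := (h (k + 1)).trans (h k).symm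
    rw [add_comm (a k)] at this
    rw [← one_add_one_eq_two, ← add_assoc]
    exact add_left_cancel this
  obtain ⟨m, hm⟩ := hodd
  have periodic_one : Function.Periodic a 1 := by
    have two_inv : ((m + 1 : ℕ) : Fin n) * 2 = 1 := by
      simpa using congrArg (Nat.cast : ℕ → Fin n) (show (m + 1) * 2 = n + 1 by omega)
    simpa only [two_inv] using periodic_two.nat_mul (m + 1)
  have hconst : ∀ k, a k = a 0 := fun k => by simpa using periodic_one.nat_mul_eq k.val
  have hsum : ((n : ℤ) - 2) • a 0 = 0 := by
    have := h 0
    simp only [hconst _, Finset.sum_const, Finset.card_univ, Fintype.card_fin] at this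
    rw [sub_zsmul, natCast_zsmul, ← this, two_zsmul, add_neg_cancel]
  rw [IsAddTorsionFree.zsmul_eq_zero_iff_right (by omega)] at hsum
  exact funext fun k => (hconst k).trans hsum

theorem Finset.sum_ite_ne_and_ne {ι M : Type*} [Fintype ι] [DecidableEq ι] [AddCommGroup M]
    (f : ι → M) {a b : ι} (hab : a ≠ b) :
    ∑ i, (if i ≠ a ∧ i ≠ b then f i else 0) = ∑ i, f i - f a - f b := by
  rw [← Finset.sum_filter, sub_sub, ← Finset.sum_pair hab,
    ← Finset.sum_sdiff_eq_sub (Finset.subset_univ _)]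
  congr 1
  ext i
  simp

theorem DifferentiableAt.fderiv_apply_eq_of_cubic_on_line {E : Type*} [NormedAddCommGroup E]
    [NormedSpace ℝ E] {f : E → ℝ} {p v : E} (hf : DifferentiableAt ℝ f p) {a b c d : ℝ}
    (h : ∀ t : ℝ, f (p + t • v) = a + b * t + c * t ^ 2 + d * t ^ 3) :
    fderiv ℝ f p v = b := by
  rw [← hf.lineDeriv_eq_fderiv, lineDeriv, funext h]
  have := ((((hasDerivAt_id' (0 : ℝ)).const_mul b).const_add a).fun_add
    ((hasDerivAt_pow 2 (0 : ℝ)).const_mul c)).fun_add ((hasDerivAt_pow 3 (0 : ℝ)).const_mul d)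
  simpa using this.deriv

section Toda

variable {n : ℕ} [NeZero n]

theorem differentiable_todaPeriodicI3 : Differentiable ℝ (todaPeriodicI3 n) := by
  refine Differentiable.sub (by fun_prop) <| Differentiable.fun_sum fun i _ =>
    Differentiable.fun_sum fun j _ => ?_
  split_ifs <;> fun_prop

theorem todaPeriodicI3_smul (t : ℝ) (p : (Fin n → ℝ) × (Fin n → ℝ)) :
    todaPeriodicI3 n (t • p)
      = (-∑ i, ∑ j, if j ≠ i ∧ j ≠ i - 1 then p.2 i * p.1 j else 0 : ℝ) * t ^ 2
        + (∑ s ∈ Finset.powersetCard 3 Finset.univ, ∏ i ∈ s, p.2 i) * t ^ 3 := by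
  have hcubic : ∀ s ∈ Finset.powersetCard 3 Finset.univ,
      ∏ i ∈ s, (t • p).2 i = (∏ i ∈ s, p.2 i) * t ^ 3 := fun s hs => by
    simp only [Prod.smul_snd, Pi.smul_apply, smul_eq_mul, Finset.prod_mul_distrib,
      Finset.prod_const, (Finset.mem_powersetCard.mp hs).2, mul_comm]
  have hquad : ∀ i j : Fin n, (if j ≠ i ∧ j ≠ i - 1 then (t • p).2 i * (t • p).1 j else 0)
      = (if j ≠ i ∧ j ≠ i - 1 then p.2 i * p.1 j else 0) * t ^ 2 := fun i j => by
    split_ifs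
    · simp only [Prod.smul_fst, Prod.smul_snd, Pi.smul_apply, smul_eq_mul]; ring
    · rw [zero_mul]
  simp only [todaPeriodicI3, Finset.sum_congr rfl hcubic, hquad, ← Finset.sum_mul]
  ring

theorem todaPeriodicI3_add_smul_single_fst (X u : Fin n → ℝ) (k : Fin n) (t : ℝ) :
    todaPeriodicI3 n (X + t • Pi.single k 1, u)
      = todaPeriodicI3 n (X, u) - (∑ i, if k ≠ i ∧ k ≠ i - 1 then u i else 0) * t := by
  simp only [todaPeriodicI3, Pi.add_apply, Pi.smul_apply, Pi.single_apply, smul_eq_mul, mul_ite,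
    mul_one, mul_zero, mul_add, ite_add_zero, Finset.sum_add_distrib, ← ite_and]
  simp only [and_comm (b := _ = k), ite_and, Finset.sum_ite_eq', Finset.mem_univ, if_true,
    Finset.sum_mul, ite_mul, zero_mul, sub_add_eq_sub_sub]

theorem todaPeriodicI3_smul_single_snd (X : Fin n → ℝ) (k : Fin n) (t : ℝ) :
    todaPeriodicI3 n (X, t • Pi.single k 1)
      = -(∑ j, if j ≠ k ∧ j ≠ k - 1 then X j else 0) * t := by
  have hcubic : ∑ s ∈ Finset.powersetCard 3 Finset.univ,
      ∏ i ∈ s, (t • Pi.single k 1 : Fin n → ℝ) i = 0 := by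
    refine Finset.sum_eq_zero fun s hs => ?_
    obtain ⟨i, his, hik⟩ := s.exists_mem_ne (by simp [(Finset.mem_powersetCard.mp hs).2]) k
    exact Finset.prod_eq_zero his (by simp [hik])
  rw [todaPeriodicI3, hcubic, zero_sub, neg_mul, neg_inj,
    Finset.sum_eq_single k (fun i _ hik => by simp [hik]) (by simp), Finset.sum_mul]
  simp only [Pi.smul_apply, Pi.single_eq_same, smul_eq_mul, one_mul, mul_comm t, ite_mul, zero_mul]

theorem fderiv_todaPeriodicI3_single_fst (hn : 2 ≤ n) (X u : Fin n → ℝ) (k : Fin n) :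
    fderiv ℝ (todaPeriodicI3 n) (X, u) (Pi.single k 1, 0) = -(∑ i, u i - u k - u (k + 1)) := by
  have h1 : (1 : Fin n) ≠ 0 := by rw [Ne, Fin.one_eq_zero_iff]; omega
  have hweight : (∑ i, if k ≠ i ∧ k ≠ i - 1 then u i else 0) = ∑ i, u i - u k - u (k + 1) := by
    rw [← Finset.sum_ite_ne_and_ne u (left_ne_add.mpr h1)]
    refine Finset.sum_congr rfl fun i _ => if_congr ?_ rfl rfl
    exact and_congr ne_comm (not_congr (eq_sub_iff_add_eq.trans eq_comm))
  refine differentiable_todaPeriodicI3.differentiableAt.fderiv_apply_eq_of_cubic_on_line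
    (a := todaPeriodicI3 n (X, u)) (c := 0) (d := 0) fun t => ?_
  rw [Prod.smul_mk, smul_zero, Prod.mk_add_mk, add_zero, todaPeriodicI3_add_smul_single_fst,
    hweight]
  ring

theorem fderiv_todaPeriodicI3_single_snd (hn : 2 ≤ n) (X : Fin n → ℝ) (k : Fin n) :
    fderiv ℝ (todaPeriodicI3 n) (X, 0) (0, Pi.single k 1) = -(∑ j, X j - X k - X (k - 1)) := by
  have h1 : (1 : Fin n) ≠ 0 := by rw [Ne, Fin.one_eq_zero_iff]; omega
  refine differentiable_todaPeriodicI3.differentiableAt.fderiv_apply_eq_of_cubic_on_line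
    (a := 0) (c := 0) (d := 0) fun t => ?_
  rw [Prod.smul_mk, smul_zero, Prod.mk_add_mk, add_zero, zero_add, todaPeriodicI3_smul_single_snd,
    Finset.sum_ite_ne_and_ne X (Ne.symm (sub_eq_self.not.mpr h1))]
  ring

theorem fderiv_todaPeriodicI3_zero : fderiv ℝ (todaPeriodicI3 n) 0 = 0 :=
  ContinuousLinearMap.ext fun v =>
    differentiable_todaPeriodicI3.differentiableAt.fderiv_apply_eq_of_cubic_on_line
      (a := 0) (b := 0) fun t => by rw [zero_add, todaPeriodicI3_smul, zero_mul, zero_add, zero_add]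

end Toda

/-- For the periodic Toda lattice with an odd number `n ≥ 3` of particles, the
gradient of `I₃` vanishes exactly at the origin. -/
theorem todaPeriodic_I3_gradient_zero_iff_odd
    (n : ℕ) [NeZero n] (hn : 3 ≤ n) (hodd : Odd n) (X u : Fin n → ℝ) :
    fderiv ℝ (todaPeriodicI3 n) (X, u) = 0 ↔ (X = 0 ∧ u = 0) := by
  refine ⟨fun h => ?_, fun ⟨hX, hu⟩ => by rw [hX, hu]; exact fderiv_todaPeriodicI3_zero⟩
  have hu : u = 0 := Fin.eq_zero_of_forall_add_add_one_eq_sum hodd fun k => by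
    have := fderiv_todaPeriodicI3_single_fst (by omega) X u k
    rw [h, zero_apply] at this
    linarith
  subst hu
  refine ⟨Fin.eq_zero_of_forall_add_add_one_eq_sum hodd fun k => ?_, rfl⟩
  have := fderiv_todaPeriodicI3_single_snd (by omega) X (k + 1)
  rw [h, zero_apply, add_sub_cancel_right] at this
  linarith
end

section
/- Let n ≥ 4 be even. On ℝ²ⁿ with coordinates (X₁,...,Xₙ,u₁,...,uₙ) define I₁ = Σ_{i=1}^n u_i and I₃ = Σ_{1 ≤ i₁ < i₂ < i₃ ≤ n} u_{i₁} u_{i₂} u_{i₃} − Σ_{1 ≤ i,j ≤ n, j ≢ i (mod n), j ≢ i−1 (mod n)} u_i X_j (X₀ := Xₙ), and let 𝕀₁₃ = (I₁, I₃) : ℝ²ⁿ → ℝ². Then rank ∇𝕀₁₃(X,u) ≤ 1 if and only if there exist X₁, X₂, u₁, u₂ ∈ ℝ with u₁ + u₂ = 0 such that X_i = X₁ for all odd i, X_i = X₂ for all even i, u_i = u₁ for all odd i, and u_i = u₂ for all even i. (Since ∇I₁ never vanishes, this set equals M₍₁₎^{𝕀₁₃}, the set where rank ∇𝕀₁₃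 = 1.) -/
/-- The conserved quantity `I₁` of the periodic Toda lattice. -/
noncomputable def todaPeriodicI1 (n : ℕ) (p : (Fin n → ℝ) × (Fin n → ℝ)) : ℝ :=
  ∑ i : Fin n, p.2 i

/-- The vectorial conserved quantity `𝕀₁₃ = (I₁, I₃)`. -/
noncomputable def todaPeriodicI13 (n : ℕ) [NeZero n]
    (p : (Fin n → ℝ) × (Fin n → ℝ)) : ℝ × ℝ :=
  (todaPeriodicI1 n p, todaPeriodicI3 n p)

/-!
Since `∇I₁ = (0, 1, …, 1)` never vanishes, `rank ∇𝕀₁₃ ≤ 1` means `∇I₃ = c ∇I₁`, i.e.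
`∂I₃/∂X_k = 0` and `∂I₃/∂u_k = c` for all `k`; Newton's identity
`6 e₃ = p₁³ - 3 p₁ p₂ + 2 p₃` makes these partial derivatives explicit. The first condition says
`u_k + u_{k+1} = U` for every `k`, so `u` alternates and `U = (n/2) U`, which forces `U = 0`
because `n ≥ 4`. Then `u_k²` is constant, and the second condition says that `X_{k-1} + X_k` is
constant, i.e. that `X` alternates too. Evenness of `n` is what lets an alternating pattern close
up around the cycle.
-/

open Finset Module

theorem six_mul_sum_powersetCard_three {σ R : Type*} [Fintype σ] [DecidableEq σ] [CommRing R]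
    (f : σ → R) :
    6 * ∑ s ∈ powersetCard 3 univ, ∏ i ∈ s, f i
      = (∑ i, f i) ^ 3 - 3 * (∑ i, f i) * ∑ i, f i ^ 2 + 2 * ∑ i, f i ^ 3 := by
  have h2 := congrArg (MvPolynomial.eval f) (MvPolynomial.mul_esymm_eq_sum σ R 2)
  have h3 := congrArg (MvPolynomial.eval f) (MvPolynomial.mul_esymm_eq_sum σ R 3)
  simp only [sum_filter, Nat.antidiagonal_succ, Nat.antidiagonal_zero] at h2 h3
  simp [MvPolynomial.psum, MvPolynomial.esymm, powersetCard_one] at h2 h3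
  linear_combination 2 * h3 + (∑ i, f i) * h2

theorem LinearMap.finrank_range_prod_le_one_iff {K V : Type*} [Field K] [AddCommGroup V]
    [Module K V] {f g : V →ₗ[K] K} (hf : f ≠ 0) :
    finrank K (range (f.prod g)) ≤ 1 ↔ ∃ c : K, g = c • f := by
  constructor
  · intro h
    obtain ⟨v₀, hv₀⟩ : ∃ v₀, f v₀ ≠ 0 := by
      by_contra! h0
      exact hf (LinearMap.ext h0)
    obtain ⟨⟨w, _⟩, hw⟩ := finrank_le_one_iff.mp h
    have coords (v : V) : ∃ c : K, c * w.1 = f v ∧ c * w.2 = g v := by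
      obtain ⟨c, hc⟩ := hw ⟨_, mem_range_self _ v⟩
      exact ⟨c, by simpa [Prod.ext_iff] using hc⟩
    have hw₁ : w.1 ≠ 0 := by
      obtain ⟨c₀, hc₀, -⟩ := coords v₀
      rintro h1
      rw [h1, mul_zero] at hc₀
      exact hv₀ hc₀.symm
    refine ⟨w.2 / w.1, LinearMap.ext fun v => ?_⟩
    obtain ⟨c, h1, h2⟩ := coords v
    rw [LinearMap.smul_apply, smul_eq_mul, ← h1, ← h2]
    field_simp
  · rintro ⟨c, rfl⟩
    calc finrank K (range (f.prod (c • f)))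
        ≤ finrank K (K ∙ ((1 : K), c)) := by
          refine Submodule.finrank_mono ?_
          rintro _ ⟨v, rfl⟩
          exact Submodule.mem_span_singleton.mpr ⟨f v, by simp [mul_comm]⟩
      _ ≤ 1 := by simpa using finrank_span_le_card ({((1 : K), c)} : Set (K × K))

section Alternating

variable {α : Type*} {n : ℕ}

def alternating (a b : α) (i : Fin n) : α :=
  if i.val % 2 = 0 then a else b

theorem Fin.val_add_one_mod_two [NeZero n] (hn : Even n) (i : Fin n) :
    (i + 1).val % 2 = (i.val + 1) % 2 := by
  have h2 : 2 ∣ n := hn.two_dvd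
  rw [Fin.val_add, Nat.mod_mod_of_dvd _ h2, Fin.val_one', Nat.add_mod, Nat.mod_mod_of_dvd _ h2,
    ← Nat.add_mod]

theorem sum_alternating [AddCommMonoid α] (hn : Even n) (a b : α) :
    ∑ i : Fin n, alternating a b i = (n / 2) • (a + b) := by
  obtain ⟨m, rfl⟩ := hn
  unfold alternating
  rw [Fin.sum_univ_eq_sum_range (fun i => if i % 2 = 0 then a else b), ← two_mul,
    Nat.mul_div_cancel_left _ two_pos]
  induction m with
  | zero => simp
  | succ m ih =>
    rw [show 2 * (m + 1) = 2 * m + 1 + 1 by ring, sum_range_succ, sum_range_succ, ih, succ_nsmul,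
      add_assoc]
    simp [Nat.add_mod]

open Fin.NatCast in
theorem forall_add_add_one_eq_iff [AddCommGroup α] [NeZero n] (hn : Even n) {f : Fin n → α}
    {s : α} : (∀ i, f i + f (i + 1) = s) ↔ ∃ a b, a + b = s ∧ f = alternating a b := by
  constructor
  · intro h
    have key (m : ℕ) : f m = if m % 2 = 0 then f 0 else s - f 0 := by
      induction m with
      | zero => simp
      | succ m ih =>
        rw [Nat.cast_succ, eq_sub_of_add_eq' (h m), ih]
        split_ifs <;> first | omega | abel
    exact ⟨f 0, s - f 0, add_sub_cancel _ _, funext fun i => by simpa [alternating] using key i⟩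
  · rintro ⟨a, b, rfl, rfl⟩ i
    have := Fin.val_add_one_mod_two hn i
    unfold alternating
    split_ifs <;> first | omega | rfl | exact add_comm b a

end Alternating

section Toda

variable {n : ℕ}

noncomputable def coordX (k : Fin n) : ((Fin n → ℝ) × (Fin n → ℝ)) →L[ℝ] ℝ :=
  (ContinuousLinearMap.proj k).comp (ContinuousLinearMap.fst ℝ _ _)

noncomputable def coordU (k : Fin n) : ((Fin n → ℝ) × (Fin n → ℝ)) →L[ℝ] ℝ :=
  (ContinuousLinearMap.proj k).comp (ContinuousLinearMap.snd ℝ _ _)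

@[simp]
theorem coordX_apply (k : Fin n) (p : (Fin n → ℝ) × (Fin n → ℝ)) : coordX k p = p.1 k := rfl

@[simp]
theorem coordU_apply (k : Fin n) (p : (Fin n → ℝ) × (Fin n → ℝ)) : coordU k p = p.2 k := rfl

theorem sum_smul_coordX_add_smul_coordU_eq_smul_iff {a b : Fin n → ℝ}
    {c : ℝ} : ∑ k, (a k • coordX k + b k • coordU k) = c • ∑ k, coordU k ↔
      ∀ k, a k = 0 ∧ b k = c := by
  constructor
  · intro h k
    exact ⟨by simpa [Pi.single_apply] using congrArg (fun L => L (Pi.single k 1, 0)) h,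
      by simpa [Pi.single_apply] using congrArg (fun L => L (0, Pi.single k 1)) h⟩
  · intro h
    simp only [fun k => (h k).1, fun k => (h k).2, zero_smul, zero_add, smul_sum]

theorem hasFDerivAt_todaPeriodicI1 (p : (Fin n → ℝ) × (Fin n → ℝ)) :
    HasFDerivAt (todaPeriodicI1 n) (∑ k, coordU k) p :=
  HasFDerivAt.fun_sum fun k _ => (coordU k).hasFDerivAt

variable [NeZero n]

noncomputable def todaPeriodicI3PartialX (u : Fin n → ℝ) (k : Fin n) : ℝ :=
  -(∑ i, u i - u k - u (k + 1))

-- `((∑ u)² - ∑ u²) / 2` is `e₂(u) = ∑_{i<j} u_i u_j`.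
noncomputable def todaPeriodicI3PartialU (X u : Fin n → ℝ) (k : Fin n) : ℝ :=
  ((∑ i, u i) ^ 2 - ∑ i, u i ^ 2) / 2 - u k * (∑ i, u i - u k) - (∑ j, X j - X (k - 1) - X k)

theorem todaPeriodicI3_eq (hn : 1 < n) (p : (Fin n → ℝ) × (Fin n → ℝ)) :
    todaPeriodicI3 n p = ((∑ i, p.2 i) ^ 3 - 3 * (∑ i, p.2 i) * (∑ i, p.2 i ^ 2)
      + 2 * ∑ i, p.2 i ^ 3) / 6 - ∑ i, p.2 i * (∑ j, p.1 j - p.1 (i - 1) - p.1 i) := by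
  have hi (i : Fin n) : i ≠ i - 1 := fun h =>
    (Fin.one_eq_zero_iff.not.mpr hn.ne') (sub_eq_self.mp h.symm)
  rw [todaPeriodicI3, ← six_mul_sum_powersetCard_three, mul_div_cancel_left₀ _ (by norm_num)]
  congr 1
  refine sum_congr rfl fun i _ => ?_
  have hterm (j : Fin n) : (if j ≠ i ∧ j ≠ i - 1 then p.2 i * p.1 j else 0)
      = p.2 i * (p.1 j - (if j = i - 1 then p.1 j else 0) - if j = i then p.1 j else 0) := by
    by_cases h1 : j = i <;> by_cases h2 : j = i - 1 <;> simp_all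
  simp [hterm, ← mul_sum, sum_sub_distrib]

theorem hasFDerivAt_todaPeriodicI3 (hn : 1 < n) (X u : Fin n → ℝ) :
    HasFDerivAt (todaPeriodicI3 n)
      (∑ k, (todaPeriodicI3PartialX u k • coordX k + todaPeriodicI3PartialU X u k • coordU k))
      (X, u) := by
  rw [funext (todaPeriodicI3_eq hn)]
  have hU (i : Fin n) :
      HasFDerivAt (fun p : (Fin n → ℝ) × (Fin n → ℝ) => p.2 i) (coordU i) (X, u) :=
    (coordU i).hasFDerivAt
  have hX (i : Fin n) :
      HasFDerivAt (fun p : (Fin n → ℝ) × (Fin n → ℝ) => p.1 i) (coordX i) (X, u) :=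
    (coordX i).hasFDerivAt
  have hpowSum (m : ℕ) := HasFDerivAt.fun_sum (u := univ) fun i _ => (hU i).pow m
  have hcoupling := HasFDerivAt.fun_sum (u := univ) fun i _ => (hU i).fun_mul
    (((HasFDerivAt.fun_sum (u := univ) fun j _ => hX j).fun_sub (hX (i - 1))).fun_sub (hX i))
  have h := ((((hpowSum 1).pow 3).fun_sub (((hpowSum 1).const_mul 3).fun_mul (hpowSum 2))).fun_add
    ((hpowSum 3).const_mul 2)).mul_const 6⁻¹ |>.fun_sub hcoupling
  simp only [pow_one, ← div_eq_mul_inv] at h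
  refine h.congr_fderiv (ContinuousLinearMap.ext fun v => ?_)
  have hshift : ∑ i, u i * v.1 (i - 1) = ∑ i, u (i + 1) * v.1 i :=
    Fintype.sum_equiv (Equiv.subRight 1) _ _ fun i => by simp
  simp only [todaPeriodicI3PartialX, todaPeriodicI3PartialU, Nat.add_one_sub_one, nsmul_eq_mul,
    Nat.cast_ofNat, tsub_self, pow_zero, one_smul, pow_one, smul_add, sub_apply, add_apply,
    smul_apply, _root_.sum_apply, coordU_apply, smul_eq_mul, coordX_apply, neg_sub]
  simp only [mul_sub, sub_mul, mul_add, sum_add_distrib, sum_sub_distrib, mul_assoc,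
    mul_left_comm _ (∑ i, u i), ← mul_sum, ← sum_mul, hshift]
  ring_nf

theorem todaPeriodicI3PartialX_eq_zero_iff (hn : 4 ≤ n) (heven : Even n) (u : Fin n → ℝ) :
    (∀ k, todaPeriodicI3PartialX u k = 0) ↔ ∃ u₁ u₂, u₁ + u₂ = 0 ∧ u = alternating u₁ u₂ := by
  simp only [todaPeriodicI3PartialX, neg_eq_zero, sub_sub, sub_eq_zero, eq_comm (a := ∑ i, u i)]
  rw [forall_add_add_one_eq_iff heven]
  constructor
  · rintro ⟨a, b, hab, rfl⟩
    have hsum := sum_alternating heven a b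
    rw [hab, nsmul_eq_mul] at hsum
    have hhalf : (2 : ℝ) ≤ (n / 2 : ℕ) := by exact_mod_cast (by omega : 2 ≤ n / 2)
    have hzero : (((n / 2 : ℕ) : ℝ) - 1) * ∑ i : Fin n, alternating a b i = 0 := by linarith
    refine ⟨a, b, ?_, rfl⟩
    rw [hab]
    exact (mul_eq_zero.mp hzero).resolve_left (by linarith)
  · rintro ⟨a, b, hab, rfl⟩
    exact ⟨a, b, by rw [sum_alternating heven, hab, smul_zero], rfl⟩

theorem exists_todaPeriodicI3PartialU_eq_add (heven : Even n) (X : Fin n → ℝ) {u₁ u₂ : ℝ}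
    (h : u₁ + u₂ = 0) :
    ∃ c, ∀ k, todaPeriodicI3PartialU X (alternating u₁ u₂) k = c + (X (k - 1) + X k) := by
  have hsum : ∑ i : Fin n, alternating u₁ u₂ i = 0 := by
    rw [sum_alternating heven, h, smul_zero]
  have hsq (k : Fin n) : alternating u₁ u₂ k ^ 2 = u₁ ^ 2 := by
    rw [eq_neg_of_add_eq_zero_right h]
    unfold alternating
    split_ifs <;> ring
  refine ⟨-(∑ i : Fin n, alternating u₁ u₂ i ^ 2) / 2 + u₁ ^ 2 - ∑ j, X j, fun k => ?_⟩
  rw [todaPeriodicI3PartialU, hsum, zero_sub, mul_neg, ← sq, hsq]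
  ring

theorem exists_todaPeriodicI3Partial_eq_iff (hn : 4 ≤ n) (heven : Even n) (X u : Fin n → ℝ) :
    (∃ c, ∀ k, todaPeriodicI3PartialX u k = 0 ∧ todaPeriodicI3PartialU X u k = c) ↔
      ∃ X₁ X₂ u₁ u₂, u₁ + u₂ = 0 ∧ X = alternating X₁ X₂ ∧ u = alternating u₁ u₂ := by
  simp only [forall_and, exists_and_left, todaPeriodicI3PartialX_eq_zero_iff hn heven]
  constructor
  · rintro ⟨⟨u₁, u₂, h, rfl⟩, c, hc⟩
    obtain ⟨c₀, hc₀⟩ := exists_todaPeriodicI3PartialU_eq_add heven X h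
    have hX (k : Fin n) : X k + X (k + 1) = c - c₀ := by
      have := hc (k + 1)
      rw [hc₀, add_sub_cancel_right] at this
      linarith
    obtain ⟨X₁, X₂, -, rfl⟩ := (forall_add_add_one_eq_iff heven).mp hX
    exact ⟨X₁, X₂, u₁, u₂, h, rfl, rfl⟩
  · rintro ⟨X₁, X₂, u₁, u₂, h, rfl, rfl⟩
    obtain ⟨c₀, hc₀⟩ := exists_todaPeriodicI3PartialU_eq_add heven (alternating X₁ X₂) h
    refine ⟨⟨u₁, u₂, h, rfl⟩, c₀ + (X₁ + X₂), fun k => ?_⟩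
    rw [hc₀, ← (forall_add_add_one_eq_iff heven).mpr ⟨X₁, X₂, rfl, rfl⟩ (k - 1), sub_add_cancel]

end Toda

/-- For the periodic Toda lattice with an even number `n ≥ 4` of particles, the
Jacobian of `𝕀₁₃ = (I₁, I₃)` has rank at most `1` exactly at the alternating
configurations `(X₁,X₂,…,X₁,X₂,u₁,u₂,…,u₁,u₂)` with `u₁ + u₂ = 0`. -/
theorem todaPeriodic_I13_rank_le_one_iff_even
    (n : ℕ) [NeZero n] (hn : 4 ≤ n) (heven : Even n) (X u : Fin n → ℝ) :
    Module.finrank ℝ (LinearMap.range (fderiv ℝ (todaPeriodicI13 n) (X, u)).toLinearMap) ≤ 1 ↔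
      ∃ X₁ X₂ u₁ u₂ : ℝ, u₁ + u₂ = 0 ∧
        (∀ i : Fin n, X i = if i.val % 2 = 0 then X₁ else X₂) ∧
        (∀ i : Fin n, u i = if i.val % 2 = 0 then u₁ else u₂) := by
  have hderiv : fderiv ℝ (todaPeriodicI13 n) (X, u) = (∑ k, coordU k).prod
      (∑ k, (todaPeriodicI3PartialX u k • coordX k + todaPeriodicI3PartialU X u k • coordU k)) :=
    ((hasFDerivAt_todaPeriodicI1 (X, u)).prodMk (hasFDerivAt_todaPeriodicI3 (by omega) X u)).fderiv
  have hI1 : ((∑ k, coordU k : ((Fin n → ℝ) × (Fin n → ℝ)) →L[ℝ] ℝ) :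
      ((Fin n → ℝ) × (Fin n → ℝ)) →ₗ[ℝ] ℝ) ≠ 0 :=
    fun h => by simpa using LinearMap.congr_fun h (0, Pi.single (0 : Fin n) (1 : ℝ))
  rw [hderiv, ContinuousLinearMap.coe_prod, LinearMap.finrank_range_prod_le_one_iff hI1]
  simp_rw [← ContinuousLinearMap.toLinearMap_smul, ContinuousLinearMap.coe_inj,
    sum_smul_coordX_add_smul_coordU_eq_smul_iff, exists_todaPeriodicI3Partial_eq_iff hn heven,
    funext_iff]
  rfl
end

section
/- Let n ≥ 2 be even and consider the non-periodic Toda system on ℝ^{n−1} × ℝⁿ: Ẋ_i = X_i(u_i − u_{i+1}) for 1 ≤ i ≤ n−1, and u̇_i = X_{i−1} − X_i for 1 ≤ i ≤ n, with the conventions X₀ = 0 and Xₙ = 0. Define M = { (X₁,...,X_{n−1},u₁,...,uₙ) : there exist X, u₁*, u₂* ∈ ℝ with X_i = X for all odd i, X_i = 0 for all even i, u_i = u₁* for all odd i, u_i = u₂* for all even i }. Then M is invariant under the dynamics: any solution with initial condition in M remains in M for all time, and on M the dynamics reduces to the three-dimensional system Ẋ = X(u₁* − u₂*), u̇₁* =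 −X, u̇₂* = X. -/
/-!
Each `Xᵢ` solves a scalar linear equation, so `Xᵢ(t) = Xᵢ(0) exp ∫₀ᵗ (uᵢ - uᵢ₊₁)`; in particular
the `Xᵢ` with odd index (counting from `0`) vanish for all time. The chain then splits into the
pairs of particles `(2j, 2j+1)`, each coupled only through `X₂ⱼ` and each governed by the same
two-particle Toda system `Ẋ = X(a - b), ȧ = -X, ḃ = X`. Since `m` is odd every particle belongs to
such a pair, all pairs start from the same point, and uniqueness of solutions for this smooth
system makes them coincide for all time.
-/

open Real

theorem ODE_solution_unique_univ_of_locallyLipschitz {E : Type*} [NormedAddCommGroup E]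
    [NormedSpace ℝ E] {v : E → E} (hv : LocallyLipschitz v) {f g : ℝ → E}
    (hf : ∀ t, HasDerivAt f (v (f t)) t) (hg : ∀ t, HasDerivAt g (v (g t)) t) {t₀ : ℝ}
    (heq : f t₀ = g t₀) : f = g := by
  ext t
  obtain ⟨a, b, ht, ht₀⟩ : ∃ a b, t ∈ Set.Ioo a b ∧ t₀ ∈ Set.Ioo a b := by
    use min t t₀ - 1, max t t₀ + 1
    grind
  set s := f '' Set.Icc a b ∪ g '' Set.Icc a b
  have hs : IsCompact s := by
    have hfc : Continuous f := continuous_iff_continuousAt.2 fun t => (hf t).continuousAt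
    have hgc : Continuous g := continuous_iff_continuousAt.2 fun t => (hg t).continuousAt
    exact (isCompact_Icc.image hfc).union (isCompact_Icc.image hgc)
  obtain ⟨K, hK⟩ := (hv.locallyLipschitzOn (s := s)).exists_lipschitzOnWith_of_compact hs
  refine ODE_solution_unique_of_mem_Ioo (v := fun _ => v) (s := fun _ => s) (fun _ _ => hK) ht₀
    (fun τ hτ => ⟨hf τ, .inl ⟨τ, Set.Ioo_subset_Icc_self hτ, rfl⟩⟩)
    (fun τ hτ => ⟨hg τ, .inr ⟨τ, Set.Ioo_subset_Icc_self hτ, rfl⟩⟩) heq ht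

theorem eq_mul_exp_integral_of_hasDerivAt {f g : ℝ → ℝ} (hg : Continuous g)
    (hf : ∀ t, HasDerivAt f (f t * g t) t) (t : ℝ) :
    f t = f 0 * exp (∫ s in (0)..t, g s) := by
  set G : ℝ → ℝ := fun t => ∫ s in (0)..t, g s
  have hG : ∀ t, HasDerivAt G (g t) t := fun t => (hg.integral_hasStrictDerivAt 0 t).hasDerivAt
  have hconst : ∀ t, HasDerivAt (fun t => f t * exp (-G t)) 0 t := fun t =>
    ((hf t).mul (hG t).neg.exp).congr_deriv (by ring)
  have := is_const_of_deriv_eq_zero (fun t => (hconst t).differentiableAt)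
    (fun t => (hconst t).deriv) t 0
  simp only [G, intervalIntegral.integral_same, neg_zero, exp_zero, mul_one] at this
  rw [← this, mul_assoc, ← exp_add, neg_add_cancel, exp_zero, mul_one]

theorem HasDerivAt.fst {𝕜 E F : Type*} [NontriviallyNormedField 𝕜] [NormedAddCommGroup E]
    [NormedSpace 𝕜 E] [NormedAddCommGroup F] [NormedSpace 𝕜 F] {f : 𝕜 → E × F} {f' : E × F}
    {x : 𝕜} (h : HasDerivAt f f' x) : HasDerivAt (fun x => (f x).1) f'.1 x :=
  (hasFDerivAt_fst (𝕜 := 𝕜) (E := E) (F := F)).comp_hasDerivAt x h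

theorem HasDerivAt.snd {𝕜 E F : Type*} [NontriviallyNormedField 𝕜] [NormedAddCommGroup E]
    [NormedSpace 𝕜 E] [NormedAddCommGroup F] [NormedSpace 𝕜 F] {f : 𝕜 → E × F} {f' : E × F}
    {x : 𝕜} (h : HasDerivAt f f' x) : HasDerivAt (fun x => (f x).2) f'.2 x :=
  (hasFDerivAt_snd (𝕜 := 𝕜) (E := E) (F := F)).comp_hasDerivAt x h

theorem toda_X_eq_zero_of_eq_zero {m : ℕ} {X : ℝ → Fin m → ℝ} {u : ℝ → Fin (m + 1) → ℝ}
    {i : Fin m}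
    (hX : ∀ t, HasDerivAt (fun τ : ℝ => X τ i) (X t i * (u t i.castSucc - u t i.succ)) t)
    (hu : ∀ i, Continuous fun τ => u τ i) (h0 : X 0 i = 0) (t : ℝ) : X t i = 0 := by
  rw [eq_mul_exp_integral_of_hasDerivAt ((hu _).sub (hu _)) hX t, h0, zero_mul]

def twoParticleTodaField (p : ℝ × ℝ × ℝ) : ℝ × ℝ × ℝ := (p.1 * (p.2.1 - p.2.2), -p.1, p.1)

theorem contDiff_twoParticleTodaField : ContDiff ℝ 1 twoParticleTodaField := by
  unfold twoParticleTodaField; fun_prop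

def todaPairState {m : ℕ} (X : ℝ → Fin m → ℝ) (u : ℝ → Fin (m + 1) → ℝ) (j : ℕ) (hj : 2 * j < m)
    (t : ℝ) : ℝ × ℝ × ℝ :=
  (X t ⟨2 * j, hj⟩, u t ⟨2 * j, by omega⟩, u t ⟨2 * j + 1, by omega⟩)

theorem hasDerivAt_todaPairState {m : ℕ} {X : ℝ → Fin m → ℝ} {u : ℝ → Fin (m + 1) → ℝ}
    (hX : ∀ (t : ℝ) (i : Fin m),
      HasDerivAt (fun τ : ℝ => X τ i) (X t i * (u t i.castSucc - u t i.succ)) t)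
    (hu : ∀ (t : ℝ) (i : Fin (m + 1)),
      HasDerivAt (fun τ : ℝ => u τ i)
        ((if h : 0 < i.val then X t ⟨i.val - 1, Nat.sub_one_lt_of_le h i.is_le⟩ else 0)
          - (if h : i.val < m then X t ⟨i.val, h⟩ else 0)) t)
    (hodd : ∀ (t : ℝ) (i : Fin m), i.val % 2 = 1 → X t i = 0) (j : ℕ) (hj : 2 * j < m)
    (t : ℝ) :
    HasDerivAt (todaPairState X u j hj) (twoParticleTodaField (todaPairState X u j hj t)) t := by
  have hleft : (if h : 0 < 2 * j then X t ⟨2 * j - 1, by omega⟩ else 0) = 0 := by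
    split_ifs with h
    · exact hodd t _ (by simp only; omega)
    · rfl
  have hright : (if h : 2 * j + 1 < m then X t ⟨2 * j + 1, h⟩ else 0) = 0 := by
    split_ifs with h
    · exact hodd t _ (by simp only; omega)
    · rfl
  have hXj := hX t ⟨2 * j, hj⟩
  have huj := hu t ⟨2 * j, by omega⟩
  have huj' := hu t ⟨2 * j + 1, by omega⟩
  simp only [hleft, dif_pos hj, zero_sub] at huj
  simp only [hright, dif_pos (show 0 < 2 * j + 1 by omega), sub_zero, Nat.add_sub_cancel] at huj'
  exact hXj.prodMk (huj.prodMk huj')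

/-- For the non-periodic Toda lattice with an even number `n = m + 1 ≥ 2` of
particles, in Flaschka-type variables
(`Ẋᵢ = Xᵢ(uᵢ − uᵢ₊₁)`, `u̇ᵢ = Xᵢ₋₁ − Xᵢ` with boundary conventions
`X₀ = Xₙ = 0`; indices numbered from `0`), the set
`M = {(X,0,…,X,0,X, u₁,u₂,…,u₁,u₂)}` is invariant under the dynamics, and on
`M` the dynamics reduces to the three-dimensional system
`Ẋ = X(u₁ − u₂)`, `u̇₁ = −X`, `u̇₂ = X`. -/
theorem todaOpen_M_invariant_and_reduced_dynamics
    (m : ℕ) (heven : Even (m + 1))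
    (X : ℝ → Fin m → ℝ) (u : ℝ → Fin (m + 1) → ℝ)
    (hX : ∀ (t : ℝ) (i : Fin m),
      HasDerivAt (fun τ : ℝ => X τ i)
        (X t i * (u t i.castSucc - u t i.succ)) t)
    (hu : ∀ (t : ℝ) (i : Fin (m + 1)),
      HasDerivAt (fun τ : ℝ => u τ i)
        ((if h : 0 < i.val then X t ⟨i.val - 1, by omega⟩ else 0)
          - (if h : i.val < m then X t ⟨i.val, h⟩ else 0)) t)
    (hinit : ∃ X₀ u₁₀ u₂₀ : ℝ,
      (∀ i : Fin m, X 0 i = if i.val % 2 = 0 then X₀ else 0) ∧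
      (∀ i : Fin (m + 1), u 0 i = if i.val % 2 = 0 then u₁₀ else u₂₀)) :
    ∃ c v₁ v₂ : ℝ → ℝ,
      (∀ (t : ℝ) (i : Fin m), X t i = if i.val % 2 = 0 then c t else 0) ∧
      (∀ (t : ℝ) (i : Fin (m + 1)), u t i = if i.val % 2 = 0 then v₁ t else v₂ t) ∧
      (∀ t : ℝ, HasDerivAt c (c t * (v₁ t - v₂ t)) t) ∧
      (∀ t : ℝ, HasDerivAt v₁ (-(c t)) t) ∧
      (∀ t : ℝ, HasDerivAt v₂ (c t) t) := by
  obtain ⟨X₀, a₀, b₀, hX0, hu0⟩ := hinit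
  have hm : m % 2 = 1 := by obtain ⟨k, hk⟩ := heven; omega
  have h0 : 2 * 0 < m := by omega
  have hu_cont : ∀ i, Continuous fun τ => u τ i := fun i =>
    continuous_iff_continuousAt.2 fun t => (hu t i).continuousAt
  have hodd : ∀ (t : ℝ) (i : Fin m), i.val % 2 = 1 → X t i = 0 := fun t i hi =>
    toda_X_eq_zero_of_eq_zero (hX · i) hu_cont (by rw [hX0, if_neg (by omega)]) t
  have hpair : ∀ j (hj : 2 * j < m), todaPairState X u j hj = todaPairState X u 0 h0 := fun j hj =>
    ODE_solution_unique_univ_of_locallyLipschitz contDiff_twoParticleTodaField.locallyLipschitz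
      (hasDerivAt_todaPairState hX hu hodd j hj) (hasDerivAt_todaPairState hX hu hodd 0 h0)
      (t₀ := 0) (by simp [todaPairState, hX0, hu0, Nat.add_mod])
  refine ⟨fun t => (todaPairState X u 0 h0 t).1, fun t => (todaPairState X u 0 h0 t).2.1,
    fun t => (todaPairState X u 0 h0 t).2.2, ?_, ?_, ?_⟩
  · intro t i
    split_ifs with hi
    · have h := congrArg Prod.fst (congrFun (hpair (i / 2) (by omega)) t)
      exact (congrArg (X t) (Fin.ext (by simp only; omega))).trans h
    · exact hodd t i (by omega)
  · intro t i
    split_ifs with hi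
    · have h := congrArg (·.2.1) (congrFun (hpair (i / 2) (by omega)) t)
      exact (congrArg (u t) (Fin.ext (by simp only; omega))).trans h
    · have h := congrArg (·.2.2) (congrFun (hpair (i / 2) (by omega)) t)
      exact (congrArg (u t) (Fin.ext (by simp only; omega))).trans h
  · have hF := hasDerivAt_todaPairState hX hu hodd 0 h0
    exact ⟨fun t => (hF t).fst, fun t => (hF t).snd.fst, fun t => (hF t).snd.snd⟩
end
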